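/- arXiv:2403.05738 — 8 statements merged into one kernel-verified Lean document; each statement's English description precedes it below -/
import Mathlib

section
/- Performance difference lemma for average-reward MDPs: for two stationary policies \pi and \pi' on a finite ergodic MDP, the difference of average rewards satisfies \rho^{\pi} - \rho^{\pi'} = \mathbb{E}_{s \sim \nu^{\pi}}[\sum_a (\pi(a|s) - \pi'(a|s)) Q^{\pi'}(s,a)], where \nu^{\pi} is the stationary distribution of \pi and Q^{\pi'} is the differential Q-function of \pi'. -/
/-- Performance difference lemma for average-reward MDPs:
`ρ^π - ρ^π' = E_{s ∼ ν^π} [∑_a (π(a|s) - π'(a|s)) Q^π'(s,a)]`. -/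
theorem average_reward_performance_difference
    {S A : Type*} [Fintype S] [Fintype A]
    (P : S → A → S → ℝ) (r : S → A → ℝ)
    (π π' : S → A → ℝ) (ν : S → ℝ) (ρ ρ' : ℝ) (V' : S → ℝ) (Q' : S → A → ℝ)
    (hPnn : ∀ s a s', 0 ≤ P s a s') (hProw : ∀ s a, ∑ s', P s a s' = 1)
    (hπnn : ∀ s a, 0 ≤ π s a) (hπrow : ∀ s, ∑ a, π s a = 1)
    (hπ'nn : ∀ s a, 0 ≤ π' s a) (hπ'row : ∀ s, ∑ a, π' s a = 1)
    -- ν is the stationary distribution of the chain induced by π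
    (hνnn : ∀ s, 0 ≤ ν s) (hνsum : ∑ s, ν s = 1)
    (hstat : ∀ s', ∑ s, ν s * (∑ a, π s a * P s a s') = ν s')
    -- ρ is the average reward of π
    (hρ : ρ = ∑ s, ν s * ∑ a, π s a * r s a)
    -- (V', Q', ρ') solve the average-reward Bellman equations for π'
    (hQ' : ∀ s a, Q' s a = r s a - ρ' + ∑ s', P s a s' * V' s')
    (hV' : ∀ s, V' s = ∑ a, π' s a * Q' s a) :
    ρ - ρ' = ∑ s, ν s * ∑ a, (π s a - π' s a) * Q' s a := by
  have h2 : ∑ s, ν s * ∑ a, π' s a * Q' s a = ∑ s, ν s * V' s := by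
    simp_rw [← hV']
  have hswap : ∑ s, ν s * ∑ a, π s a * ∑ s', P s a s' * V' s'
      = ∑ s, ν s * V' s := by
    have : ∀ s, ν s * ∑ a, π s a * ∑ s', P s a s' * V' s'
        = ∑ s', (∑ a, ν s * (π s a * P s a s')) * V' s' := by
      intro s
      simp_rw [Finset.mul_sum]
      rw [Finset.sum_comm]
      refine Finset.sum_congr rfl fun s' _ => ?_
      rw [Finset.sum_mul]
      exact Finset.sum_congr rfl fun a _ => by ring
    simp_rw [this]
    rw [Finset.sum_comm]
    refine Finset.sum_congr rfl fun s' _ => ?_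
    rw [← Finset.sum_mul, ← hstat s']
    refine congrArg (· * V' s') ?_
    exact Finset.sum_congr rfl fun s _ => (Finset.mul_sum _ _ _).symm
  have h1 : ∑ s, ν s * ∑ a, π s a * Q' s a = (ρ - ρ') + ∑ s, ν s * V' s := by
    have expand : ∀ s, ∑ a, π s a * Q' s a
        = (∑ a, π s a * r s a) - ρ' + ∑ a, π s a * ∑ s', P s a s' * V' s' := by
      intro s
      simp_rw [hQ', mul_add, mul_sub, Finset.sum_add_distrib, Finset.sum_sub_distrib,
        ← Finset.sum_mul, hπrow, one_mul]
    calc ∑ s, ν s * ∑ a, π s a * Q' s a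
        = ∑ s, (ν s * ∑ a, π s a * r s a - ν s * ρ'
            + ν s * ∑ a, π s a * ∑ s', P s a s' * V' s') := by
          simp_rw [expand, mul_add, mul_sub]
      _ = (ρ - ρ') + ∑ s, ν s * V' s := by
          rw [Finset.sum_add_distrib, Finset.sum_sub_distrib, ← Finset.sum_mul, hνsum,
            one_mul, ← hρ, hswap]
  have : ∑ s, ν s * ∑ a, (π s a - π' s a) * Q' s a
      = (∑ s, ν s * ∑ a, π s a * Q' s a) - ∑ s, ν s * ∑ a, π' s a * Q' s a := by
    rw [← Finset.sum_sub_distrib]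
    refine Finset.sum_congr rfl fun s _ => ?_
    rw [← mul_sub, ← Finset.sum_sub_distrib]
    refine congrArg (ν s * ·) ?_
    exact Finset.sum_congr rfl fun a _ => by ring
  rw [this, h1, h2]
  ring
end

section
/- Sensitivity of stationary distribution and average reward: if for every policy \pi the differential Q-function of any reward in [0,1] has span bound \kappa (i.e., \min_b \|Q^{\pi} + b\mathbf{1}\|_\infty \le \kappa), then for any two policies \pi, \pi': |\nu^{\pi}(s) - \nu^{\pi'}(s)| \le \kappa \max_{s'} \|\pi(\cdot|s') - \pi'(\cdot|s')\|_1 for every state s, and |\rho^{\pi} - \rho^{\pi'}| \le \kappa \max_{s'} \|\pi(\cdot|s') - \pi'(\cdot|s')\|_1. -/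
/-- A tabular stochastic policy: nonnegative entries with rows summing to one. -/
def IsPolicy {S A : Type*} [Fintype A] (p : S → A → ℝ) : Prop :=
  (∀ s a, 0 ≤ p s a) ∧ ∀ s, ∑ a, p s a = 1

/-- The `(1,∞)` distance between two policies: `max_s ‖π(·|s) - π'(·|s)‖₁`. -/
noncomputable def polDist {S A : Type*} [Fintype A] (π π' : S → A → ℝ) : ℝ :=
  ⨆ s, ∑ a, |π s a - π' s a|

/-- Sensitivity of the stationary distribution and of the average reward:
if every differential Q-function of any reward in `[0,1]` has span at most `κ`, then
`|ν^π(s) - ν^π'(s)| ≤ κ ‖π - π'‖_{1,∞}` and `|ρ^π - ρ^π'| ≤ κ ‖π - π'‖_{1,∞}`. -/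
theorem stationary_and_reward_sensitivity
    {S A : Type*} [Fintype S] [Nonempty S] [Fintype A]
    (P : S → A → S → ℝ) (r : S → A → ℝ) (κ : ℝ)
    (νfun : (S → A → ℝ) → S → ℝ)
    (π π' : S → A → ℝ)
    (hPnn : ∀ s a s', 0 ≤ P s a s') (hProw : ∀ s a, ∑ s', P s a s' = 1)
    (hπ : IsPolicy π) (hπ' : IsPolicy π')
    (hr : ∀ s a, r s a ∈ Set.Icc (0 : ℝ) 1)
    -- `νfun` assigns each policy its stationary distribution
    (hν : ∀ p, IsPolicy p → (∀ s, 0 ≤ νfun p s) ∧ (∑ s, νfun p s = 1) ∧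
      (∀ s', ∑ s, νfun p s * (∑ a, p s a * P s a s') = νfun p s'))
    -- span bound: for every reward in [0,1] and every policy, the differential
    -- Q-function has span at most κ
    (hκ : ∀ r' : S → A → ℝ, (∀ s a, r' s a ∈ Set.Icc (0 : ℝ) 1) →
      ∀ p, IsPolicy p → ∃ (Q : S → A → ℝ) (V : S → ℝ) (b : ℝ),
        (∀ s a, Q s a = r' s a - (∑ s', νfun p s' * ∑ a, p s' a * r' s' a)
          + ∑ s', P s a s' * V s') ∧
        (∀ s, V s = ∑ a, p s a * Q s a) ∧
        (∀ s a, |Q s a + b| ≤ κ)) :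
    (∀ s, |νfun π s - νfun π' s| ≤ κ * polDist π π') ∧
    |(∑ s, νfun π s * ∑ a, π s a * r s a) - (∑ s, νfun π' s * ∑ a, π' s a * r s a)|
      ≤ κ * polDist π π' := by
  classical
  have hA : Nonempty A := by
    by_contra h
    rw [not_nonempty_iff] at h
    have := hπ.2 (Classical.arbitrary S)
    simp at this
  obtain ⟨hν0, hν1, hνst⟩ := hν π hπ
  obtain ⟨hν0', hν1', hνst'⟩ := hν π' hπ'
  have hκ0 : 0 ≤ κ := by
    obtain ⟨Q, V, b, _, _, hb⟩ := hκ r hr π hπ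
    exact le_trans (abs_nonneg _) (hb (Classical.arbitrary S) (Classical.arbitrary A))
  have hpd : ∀ s : S, ∑ a, |π s a - π' s a| ≤ polDist π π' := fun s =>
    le_ciSup (f := fun s => ∑ a, |π s a - π' s a|)
      (Set.Finite.bddAbove (Set.finite_range _)) s
  -- core: average-reward sensitivity for any reward in [0,1]
  have core : ∀ r' : S → A → ℝ, (∀ s a, r' s a ∈ Set.Icc (0 : ℝ) 1) →
      |(∑ s, νfun π s * ∑ a, π s a * r' s a)
        - (∑ s, νfun π' s * ∑ a, π' s a * r' s a)| ≤ κ * polDist π π' := by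
    intro r' hr'
    obtain ⟨Q, V, b, hQdef, hVdef, hspan⟩ := hκ r' hr' π' hπ'
    set ρ' := ∑ s, νfun π' s * ∑ a, π' s a * r' s a with hρ'
    have inner : ∀ s, ∑ a, π s a * Q s a
        = (∑ a, π s a * r' s a) - ρ' + ∑ a, π s a * ∑ s', P s a s' * V s' := by
      intro s
      calc ∑ a, π s a * Q s a
          = ∑ a, (π s a * r' s a - π s a * ρ' + π s a * ∑ s', P s a s' * V s') := by
            refine Finset.sum_congr rfl fun a _ => ?_
            rw [hQdef]; ring
        _ = (∑ a, π s a * r' s a) - (∑ a, π s a) * ρ'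
              + ∑ a, π s a * ∑ s', P s a s' * V s' := by
            rw [Finset.sum_add_distrib, Finset.sum_sub_distrib, Finset.sum_mul]
        _ = _ := by rw [hπ.2 s]; ring
    have station : ∑ s, νfun π s * ∑ a, π s a * ∑ s', P s a s' * V s'
        = ∑ s, νfun π s * V s := by
      calc ∑ s, νfun π s * ∑ a, π s a * ∑ s', P s a s' * V s'
          = ∑ s, ∑ s', (νfun π s * ∑ a, π s a * P s a s') * V s' := by
            refine Finset.sum_congr rfl fun s _ => ?_
            simp only [Finset.mul_sum, Finset.sum_mul]
            rw [Finset.sum_comm]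
            refine Finset.sum_congr rfl fun s' _ => ?_
            refine Finset.sum_congr rfl fun a _ => ?_
            ring
        _ = ∑ s', (∑ s, νfun π s * ∑ a, π s a * P s a s') * V s' := by
            rw [Finset.sum_comm]
            refine Finset.sum_congr rfl fun s' _ => ?_
            rw [Finset.sum_mul]
        _ = ∑ s, νfun π s * V s := by
            refine Finset.sum_congr rfl fun s' _ => ?_
            rw [hνst s']
    have key : (∑ s, νfun π s * ∑ a, π s a * r' s a) - ρ'
        = ∑ s, νfun π s * ∑ a, (π s a - π' s a) * (Q s a + b) := by
      have h1 : ∑ s, νfun π s * ∑ a, π s a * Q s a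
          = (∑ s, νfun π s * ∑ a, π s a * r' s a) - ρ' + ∑ s, νfun π s * V s := by
        calc ∑ s, νfun π s * ∑ a, π s a * Q s a
            = ∑ s, (νfun π s * ∑ a, π s a * r' s a - νfun π s * ρ'
                + νfun π s * ∑ a, π s a * ∑ s', P s a s' * V s') := by
              refine Finset.sum_congr rfl fun s _ => ?_
              rw [inner s]; ring
          _ = (∑ s, νfun π s * ∑ a, π s a * r' s a) - (∑ s, νfun π s) * ρ'
                + ∑ s, νfun π s * ∑ a, π s a * ∑ s', P s a s' * V s' := by
              rw [Finset.sum_add_distrib, Finset.sum_sub_distrib, Finset.sum_mul]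
          _ = _ := by rw [hν1, station]; ring
      have h2 : ∑ s, νfun π s * V s = ∑ s, νfun π s * ∑ a, π' s a * Q s a := by
        refine Finset.sum_congr rfl fun s _ => ?_
        rw [hVdef s]
      have h3 : ∀ s, ∑ a, (π s a - π' s a) * (Q s a + b)
          = (∑ a, π s a * Q s a) - ∑ a, π' s a * Q s a := by
        intro s
        have e : ∑ a, (π s a - π' s a) * (Q s a + b)
            = ∑ a, (π s a * Q s a - π' s a * Q s a + (π s a * b - π' s a * b)) :=
          Finset.sum_congr rfl fun a _ => by ring
        rw [e, Finset.sum_add_distrib, Finset.sum_sub_distrib, Finset.sum_sub_distrib,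
          ← Finset.sum_mul, ← Finset.sum_mul, hπ.2 s, hπ'.2 s]
        ring
      have h4 : ∑ s, νfun π s * ∑ a, (π s a - π' s a) * (Q s a + b)
          = (∑ s, νfun π s * ∑ a, π s a * Q s a) - ∑ s, νfun π s * ∑ a, π' s a * Q s a := by
        rw [← Finset.sum_sub_distrib]
        refine Finset.sum_congr rfl fun s _ => ?_
        rw [h3 s]; ring
      rw [h4, h1, h2]; ring
    rw [key]
    calc |∑ s, νfun π s * ∑ a, (π s a - π' s a) * (Q s a + b)|
        ≤ ∑ s, |νfun π s * ∑ a, (π s a - π' s a) * (Q s a + b)| :=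
          Finset.abs_sum_le_sum_abs _ _
      _ ≤ ∑ s, νfun π s * (κ * polDist π π') := by
          refine Finset.sum_le_sum fun s _ => ?_
          rw [abs_mul, abs_of_nonneg (hν0 s)]
          refine mul_le_mul_of_nonneg_left ?_ (hν0 s)
          calc |∑ a, (π s a - π' s a) * (Q s a + b)|
              ≤ ∑ a, |(π s a - π' s a) * (Q s a + b)| := Finset.abs_sum_le_sum_abs _ _
            _ ≤ ∑ a, |π s a - π' s a| * κ := by
                refine Finset.sum_le_sum fun a _ => ?_
                rw [abs_mul]
                exact mul_le_mul_of_nonneg_left (hspan s a) (abs_nonneg _)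
            _ = κ * ∑ a, |π s a - π' s a| := by rw [← Finset.sum_mul]; ring
            _ ≤ κ * polDist π π' := mul_le_mul_of_nonneg_left (hpd s) hκ0
      _ = κ * polDist π π' := by rw [← Finset.sum_mul, hν1, one_mul]
  constructor
  · intro s0
    have hind : ∀ p : S → A → ℝ, IsPolicy p →
        (∑ s, νfun p s * ∑ a, p s a * (if s = s0 then (1:ℝ) else 0)) = νfun p s0 := by
      intro p hp
      have : ∀ s, (∑ a, p s a * (if s = s0 then (1:ℝ) else 0))
          = if s = s0 then 1 else 0 := by
        intro s
        by_cases h : s = s0 <;> simp [h, hp.2]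
      simp only [this]
      rw [Finset.sum_congr rfl fun s _ => (by split <;> simp : νfun p s * (if s = s0 then (1:ℝ) else 0) = if s = s0 then νfun p s else 0)]
      simp
    have := core (fun s _ => if s = s0 then (1:ℝ) else 0)
      (fun s a => by by_cases h : s = s0 <;> simp [h])
    rw [hind π hπ, hind π' hπ'] at this
    exact this
  · exact core r hr
end

section
/- If \sup_s \|(P^{\pi})^t(\cdot|s) - \nu^{\pi}\|_1 \le C_p \varrho^t for all t \ge 1 with 0 \le \varrho < 1, then I - P^{\pi} + P^{\pi,\infty} is invertible, (I - P^{\pi} + P^{\pi,\infty})^{-1} = I + \sum_{t=1}^{\infty}((P^{\pi})^t - P^{\pi,\infty}), and \|(I - P^{\pi} + P^{\pi,\infty})^{-1}\|_{\infty} \le 1 + C_p \varrho/(1 - \varrho). -/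
/-!
Write `A = P - P^∞`. Since `P` is row-stochastic and `ν` is stationary with total mass one,
`P P^∞ = P^∞ P = P^∞ P^∞ = P^∞`, which gives `Aᵗ = Pᵗ - P^∞` for `t ≥ 1`. The mixing bound then
reads `‖Aᵗ‖_∞ ≤ C_p ϱᵗ`, so the Neumann series `∑ Aᵗ` converges absolutely in the row-sum norm;
its sum inverts `1 - A = I - P + P^∞` and has norm at most `1 + ∑_{t ≥ 1} C_p ϱᵗ`.
-/

/-- The operator norm of a square matrix induced by the supremum norm on vectors,
i.e. the maximal absolute row sum. -/
noncomputable def rowSumNorm {S : Type*} [Fintype S] (M : Matrix S S ℝ) : ℝ :=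
  ⨆ i, ∑ j, |M i j|

attribute [local instance] Matrix.linftyOpSeminormedAddCommGroup
  Matrix.linftyOpNormedAddCommGroup Matrix.linftyOpNormedRing Matrix.linftyOpNormedSpace

theorem sub_pow_succ_eq_pow_succ_sub {R : Type*} [Ring R] {p q : R} (hpq : p * q = q)
    (hqp : q * p = q) (hqq : q * q = q) (n : ℕ) : (p - q) ^ (n + 1) = p ^ (n + 1) - q := by
  have hpow_mul (k : ℕ) : p ^ k * q = q := by
    induction k with
    | zero => rw [pow_zero, one_mul]
    | succ k ih => rw [pow_succ', mul_assoc, ih, hpq]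
  induction n with
  | zero => rw [zero_add, pow_one, pow_one]
  | succ n ih =>
    rw [pow_succ, ih, pow_succ p (n + 1), sub_mul, mul_sub, mul_sub, hpow_mul, hqp, hqq]
    abel

namespace Matrix

variable {m α : Type*} [Fintype m]

theorem mul_eq_right_of_sum_row_eq_one [NonAssocSemiring α] {n : Type*} {P : Matrix m m α}
    {Q : Matrix m n α} {ν : n → α} (hP : ∀ i, ∑ j, P i j = 1) (hQ : ∀ i j, Q i j = ν j) :
    P * Q = Q := by
  ext i k
  simp only [mul_apply, hQ, ← Finset.sum_mul, hP, one_mul]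

theorem mul_eq_left_of_stationary [NonUnitalNonAssocSemiring α] {l : Type*} {Q : Matrix l m α}
    {P : Matrix m m α} {ν : m → α} (hQ : ∀ i j, Q i j = ν j)
    (hν : ∀ k, ∑ j, ν j * P j k = ν k) : Q * P = Q := by
  ext i k
  simp only [mul_apply, hQ, hν]

theorem linfty_opNorm_one_le [DecidableEq m] [SeminormedRing α] [NormOneClass α] :
    ‖(1 : Matrix m m α)‖ ≤ 1 := by
  rw [← diagonal_one, linfty_opNorm_diagonal]
  exact (pi_norm_const_le (1 : α)).trans_eq norm_one

end Matrix

open Matrix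

theorem rowSumNorm_eq_linfty_opNorm {S : Type*} [Fintype S] (M : Matrix S S ℝ) :
    rowSumNorm M = ‖M‖ := by
  rw [linfty_opNorm_def, Finset.sup_univ_eq_ciSup (fun i : S => ∑ j, ‖M i j‖₊), NNReal.coe_iSup]
  simp only [NNReal.coe_sum, coe_nnnorm, Real.norm_eq_abs, rowSumNorm]

theorem resolvent_inverse_bound_general
    {S : Type*} [Fintype S] [DecidableEq S]
    (P : Matrix S S ℝ) (ν : S → ℝ) (Cp ϱ : ℝ)
    (hProw : ∀ s, ∑ s', P s s' = 1)
    (hνsum : ∑ s, ν s = 1)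
    (hstat : ∀ s', ∑ s, ν s * P s s' = ν s')
    (Pinf : Matrix S S ℝ) (hPinf : ∀ s s', Pinf s s' = ν s')
    (hCp : 0 ≤ Cp) (hϱ0 : 0 ≤ ϱ) (hϱ1 : ϱ < 1)
    (hmix : ∀ t : ℕ, 1 ≤ t → ∀ s, ∑ s', |(P ^ t) s s' - ν s'| ≤ Cp * ϱ ^ t) :
    IsUnit (1 - P + Pinf) ∧
    (∀ s s', HasSum (fun t : ℕ => (P ^ (t + 1)) s s' - Pinf s s')
      (((1 - P + Pinf)⁻¹ - 1) s s')) ∧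
    rowSumNorm ((1 - P + Pinf)⁻¹) ≤ 1 + Cp * ϱ / (1 - ϱ) := by
  have hPinf_row (s : S) : ∑ s', Pinf s s' = 1 := by simp only [hPinf, hνsum]
  have hpow (t : ℕ) : (P - Pinf) ^ (t + 1) = P ^ (t + 1) - Pinf :=
    sub_pow_succ_eq_pow_succ_sub (mul_eq_right_of_sum_row_eq_one hProw hPinf)
      (mul_eq_left_of_stationary hPinf hstat) (mul_eq_right_of_sum_row_eq_one hPinf_row hPinf) t
  have hnorm (t : ℕ) : ‖(P - Pinf) ^ (t + 1)‖ ≤ Cp * ϱ ^ (t + 1) := by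
    rw [← rowSumNorm_eq_linfty_opNorm, hpow]
    refine Real.iSup_le (fun s => ?_) (by positivity)
    simpa only [Matrix.sub_apply, hPinf] using hmix (t + 1) le_add_self s
  have hgeom : HasSum (fun t : ℕ => Cp * ϱ ^ (t + 1)) (Cp * ϱ / (1 - ϱ)) := by
    simpa only [pow_succ', ← mul_assoc, div_eq_mul_inv] using
      (hasSum_geometric_of_lt_one hϱ0 hϱ1).mul_left (Cp * ϱ)
  obtain ⟨T, hT⟩ := Summable.of_norm_bounded hgeom.summable hnorm
  have hneumann : HasSum (fun t : ℕ => (P - Pinf) ^ t) (1 + T) := by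
    have h := hT.zero_add
    rwa [pow_zero] at h
  have hright : (1 - P + Pinf) * (1 + T) = 1 := by
    rw [show 1 - P + Pinf = 1 - (P - Pinf) by abel, ← hneumann.tsum_eq]
    exact hneumann.summable.one_sub_mul_tsum_pow
  have hinv : (1 - P + Pinf)⁻¹ = 1 + T := inv_eq_right_inv hright
  refine ⟨IsUnit.of_mul_eq_one _ hright, fun s s' => ?_, ?_⟩
  · rw [hinv, add_sub_cancel_left]
    simpa only [hpow, Matrix.sub_apply] using Pi.hasSum.mp (Pi.hasSum.mp hT s) s'
  · rw [hinv, rowSumNorm_eq_linfty_opNorm]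
    calc ‖1 + T‖ ≤ ‖(1 : Matrix S S ℝ)‖ + ‖T‖ := norm_add_le _ _
      _ ≤ 1 + Cp * ϱ / (1 - ϱ) :=
        add_le_add linfty_opNorm_one_le (hT.norm_le_of_bounded hgeom hnorm)

/-- If `sup_s ‖(P^π)^t(·|s) - ν^π‖₁ ≤ C_p ϱ^t` for all `t ≥ 1` with `0 ≤ ϱ < 1`, then
`I - P^π + P^{π,∞}` is invertible, its inverse is `I + ∑_{t≥1} ((P^π)^t - P^{π,∞})`
(entrywise convergent series), and `‖(I - P^π + P^{π,∞})⁻¹‖_∞ ≤ 1 + C_p ϱ/(1-ϱ)`. -/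
theorem resolvent_inverse_bound
    {S : Type*} [Fintype S] [DecidableEq S] [Nonempty S]
    (P : Matrix S S ℝ) (ν : S → ℝ) (Cp ϱ : ℝ)
    (hPnn : ∀ s s', 0 ≤ P s s') (hProw : ∀ s, ∑ s', P s s' = 1)
    (hνnn : ∀ s, 0 ≤ ν s) (hνsum : ∑ s, ν s = 1)
    (hstat : ∀ s', ∑ s, ν s * P s s' = ν s')
    (Pinf : Matrix S S ℝ) (hPinf : ∀ s s', Pinf s s' = ν s')
    (hCp : 0 ≤ Cp) (hϱ0 : 0 ≤ ϱ) (hϱ1 : ϱ < 1)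
    (hmix : ∀ t : ℕ, 1 ≤ t → ∀ s, ∑ s', |(P ^ t) s s' - ν s'| ≤ Cp * ϱ ^ t) :
    IsUnit (1 - P + Pinf) ∧
    (∀ s s', HasSum (fun t : ℕ => (P ^ (t + 1)) s s' - Pinf s s')
      (((1 - P + Pinf)⁻¹ - 1) s s')) ∧
    rowSumNorm ((1 - P + Pinf)⁻¹) ≤ 1 + Cp * ϱ / (1 - ϱ) :=
  resolvent_inverse_bound_general P ν Cp ϱ hProw hνsum hstat Pinf hPinf hCp hϱ0 hϱ1 hmix
end

section
/- If a static potential game structure holds at every state and transitions are action-independent, the Markov game is an average-reward Markov potential game: if r_i(s,\mathbf{a}) = \phi(s,\mathbf{a}) + u_i(s, a_{-i}) for all i and P(s'|s,\mathbf{a}) = P(s'|s), then \Phi(\pi) := \langle \nu, \overline{\phi}^{\pi} \rangle (with \nu the common stationary distribution and \overline{\phi}^{\pi}(s) = \sum_{\mathbf{a}} \pi(\mathbf{a}|s)\phi(s,\mathbf{a})) satisfies \Phi(\pi_i,\pi_{-i}) - \Phi(\pi_i',\pi_{-i}) = \rho_i^{\pi_i,\pi_{-i}} - \rho_i^{\pi_i',\pi_{-i}}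 for all i, \pi_i, \pi_i', \pi_{-i}. -/
private lemma sum_update_split {N : ℕ} {A : Fin N → Type*} [∀ i, Fintype (A i)] (i : Fin N)
    (w : ∀ j, A j → ℝ) (q : A i → ℝ)
    (f : (∀ j, A j) → ℝ) (hf : ∀ a b, (∀ j, j ≠ i → a j = b j) → f a = f b)
    (x₀ : A i) :
    ∑ a : ∀ j, A j, (∏ j, Function.update w i q j (a j)) * f a
      = (∑ x, q x) * ∑ g : ∀ j : {j // j ≠ i}, A j,
          (∏ j : {j // j ≠ i}, w j (g j))
            * f ((Equiv.piSplitAt i A).symm (x₀, g)) := by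
  rw [← Equiv.sum_comp (Equiv.piSplitAt i A).symm, Fintype.sum_prod_type,
    Finset.sum_mul]
  apply Finset.sum_congr rfl
  intro x _
  rw [Finset.mul_sum]
  apply Finset.sum_congr rfl
  intro g _
  have h1 : (∏ j, Function.update w i q j ((Equiv.piSplitAt i A).symm (x, g) j))
      = q x * ∏ j : {j // j ≠ i}, w j (g j) := by
    rw [Fintype.prod_eq_mul_prod_compl i]
    congr 1
    · simp
    · rw [Finset.prod_subtype ({i}ᶜ : Finset (Fin N)) (p := fun j => j ≠ i)
        (by intro j; simp)]
      apply Finset.prod_congr rfl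
      intro j _
      rw [Function.update_of_ne j.2]
      congr 1
      simp [Equiv.piSplitAt, j.2]
  have h2 : f ((Equiv.piSplitAt i A).symm (x, g))
      = f ((Equiv.piSplitAt i A).symm (x₀, g)) := by
    apply hf
    intro j hj
    simp [Equiv.piSplitAt, hj]
  rw [h1, h2]; ring

/-- If rewards decompose as a common state potential plus per-agent dummy terms,
`r_i(s,a) = φ(s,a) + u_i(s,a_{-i})`, and transitions do not depend on actions (so the
stationary distribution `ν` is common to all joint policies), then the Markov game is an
average-reward Markov potential game with potential `Φ(π) = ⟨ν, φ̄^π⟩`. -/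
theorem actionIndependent_transitions_give_potential_game
    {N : ℕ} {S : Type*} [Fintype S] {A : Fin N → Type*} [∀ i, Fintype (A i)]
    (φ : S → (∀ i, A i) → ℝ) (u : Fin N → S → (∀ i, A i) → ℝ)
    (r : Fin N → S → (∀ i, A i) → ℝ)
    -- each `u i` does not depend on agent `i`'s own action
    (hu : ∀ (i : Fin N) (s : S) (a b : ∀ j, A j),
      (∀ j, j ≠ i → a j = b j) → u i s a = u i s b)
    (hr : ∀ i s a, r i s a = φ s a + u i s a)
    (ν : S → ℝ) (hνnn : ∀ s, 0 ≤ ν s) (hνsum : ∑ s, ν s = 1) :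
    ∀ (i : Fin N) (π : ∀ j, S → A j → ℝ) (p p' : S → A i → ℝ),
      (∀ j s, (∀ a, 0 ≤ π j s a) ∧ ∑ a, π j s a = 1) →
      (∀ s, (∀ a, 0 ≤ p s a) ∧ ∑ a, p s a = 1) →
      (∀ s, (∀ a, 0 ≤ p' s a) ∧ ∑ a, p' s a = 1) →
      (∑ s, ν s * ∑ a : ∀ j, A j,
          (∏ j, Function.update π i p j s (a j)) * φ s a)
        - (∑ s, ν s * ∑ a : ∀ j, A j,
          (∏ j, Function.update π i p' j s (a j)) * φ s a)
      = (∑ s, ν s * ∑ a : ∀ j, A j,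
          (∏ j, Function.update π i p j s (a j)) * r i s a)
        - (∑ s, ν s * ∑ a : ∀ j, A j,
          (∏ j, Function.update π i p' j s (a j)) * r i s a) := by
  intro i π p p' hπ hp hp'
  rcases isEmpty_or_nonempty (A i) with hA | hA
  · have hE : IsEmpty (∀ j, A j) := ⟨fun a => hA.false (a i)⟩
    simp [Finset.univ_eq_empty]
  · obtain ⟨x₀⟩ := hA
    -- the product over joint actions rewritten with per-state strategies
    have hprod : ∀ (q : S → A i → ℝ) (s : S) (a : ∀ j, A j),
        (∏ j, Function.update π i q j s (a j))
          = ∏ j, Function.update (fun j => π j s) i (q s) j (a j) := by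
      intro q s a
      apply Finset.prod_congr rfl
      intro j _
      rcases eq_or_ne j i with rfl | hj
      · simp
      · rw [Function.update_of_ne hj, Function.update_of_ne hj]
    -- key: the value of the dummy term is independent of agent i's strategy
    have key : ∀ s, (∑ a : ∀ j, A j,
          (∏ j, Function.update π i p j s (a j)) * u i s a)
        = ∑ a : ∀ j, A j,
          (∏ j, Function.update π i p' j s (a j)) * u i s a := by
      intro s
      simp only [hprod]
      rw [sum_update_split i (fun j => π j s) (p s) (u i s) (hu i s) x₀,
        sum_update_split i (fun j => π j s) (p' s) (u i s) (hu i s) x₀,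
        (hp s).2, (hp' s).2]
    have expand : ∀ (q : S → A i → ℝ) (s : S),
        (∑ a : ∀ j, A j, (∏ j, Function.update π i q j s (a j)) * r i s a)
          = (∑ a : ∀ j, A j, (∏ j, Function.update π i q j s (a j)) * φ s a)
            + ∑ a : ∀ j, A j, (∏ j, Function.update π i q j s (a j)) * u i s a := by
      intro q s
      rw [← Finset.sum_add_distrib]
      apply Finset.sum_congr rfl
      intro a _
      rw [hr]; ring
    simp only [expand, mul_add, Finset.sum_add_distrib]
    have : (∑ s, ν s * ∑ a : ∀ j, A j,
          (∏ j, Function.update π i p j s (a j)) * u i s a)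
        = ∑ s, ν s * ∑ a : ∀ j, A j,
          (∏ j, Function.update π i p' j s (a j)) * u i s a := by
      apply Finset.sum_congr rfl
      intro s _
      rw [key s]
    rw [this]; ring
end

section
/- Descent-lemma corollary with inexact gradients: let f be l-smooth on a convex set C, let x \in C and x^+ = \mathrm{Proj}_C(x - \beta g) for some vector g. Then f(x^+) - f(x) \le (3l/4 - 1/\beta)\|x - x^+\|_2^2 + (1/l)\|\nabla f(x) - g\|_2^2. -/
/-! The descent lemma gives `f x⁺ ≤ f x + ⟪∇f x, x⁺ - x⟫ + l/2 ‖x⁺ - x‖²`. Split `∇f x` as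
`g + (∇f x - g)`: the variational inequality of the projection bounds `⟪g, x⁺ - x⟫` by
`-‖x - x⁺‖² / β`, and Young's inequality bounds the error term by
`‖∇f x - g‖² / l + l/4 ‖x⁺ - x‖²`. -/

open RealInnerProductSpace Set

section

variable {E : Type*} [NormedAddCommGroup E] [InnerProductSpace ℝ E]

theorem inner_sub_le_zero_of_forall_norm_sub_le {C : Set E} (hC : Convex ℝ C) {u v w : E}
    (hv : v ∈ C) (hmin : ∀ w ∈ C, ‖u - v‖ ≤ ‖u - w‖) (hw : w ∈ C) : ⟪u - v, w - v⟫ ≤ 0 := by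
  have : Nonempty C := ⟨⟨v, hv⟩⟩
  have hinf : ‖u - v‖ = ⨅ w : C, ‖u - w‖ :=
    le_antisymm (le_ciInf fun w ↦ hmin w w.2)
      (ciInf_le ⟨0, forall_mem_range.2 fun _ ↦ norm_nonneg _⟩ (⟨v, hv⟩ : C))
  exact (norm_eq_iInf_iff_real_inner_le_zero hC hv).1 hinf w hw

theorem norm_sub_sq_le_mul_inner_of_forall_norm_sub_le {C : Set E} (hC : Convex ℝ C)
    {x g xplus : E} {β : ℝ} (hx : x ∈ C) (hmem : xplus ∈ C)
    (hproj : ∀ y ∈ C, ‖x - β • g - xplus‖ ≤ ‖x - β • g - y‖) :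
    ‖x - xplus‖ ^ 2 ≤ β * ⟪g, x - xplus⟫ := by
  have h := inner_sub_le_zero_of_forall_norm_sub_le hC hmem hproj hx
  rw [sub_right_comm, inner_sub_left, real_inner_self_eq_norm_sq, real_inner_smul_left] at h
  linarith

theorem inner_le_one_div_mul_norm_sq_add {l : ℝ} (hl : 0 < l) (a b : E) :
    ⟪a, b⟫ ≤ 1 / l * ‖a‖ ^ 2 + l / 4 * ‖b‖ ^ 2 := by
  have hsq : 1 / l * ‖a‖ ^ 2 + l / 4 * ‖b‖ ^ 2 - ‖a‖ * ‖b‖ = (‖a‖ - l / 2 * ‖b‖) ^ 2 / l := by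
    field_simp
    ring
  have : 0 ≤ (‖a‖ - l / 2 * ‖b‖) ^ 2 / l := by positivity
  linarith [real_inner_le_norm a b]

variable [CompleteSpace E]

theorem hasDerivAt_comp_add_smul {f : E → ℝ} {x d : E} {t : ℝ}
    (hf : DifferentiableAt ℝ f (x + t • d)) :
    HasDerivAt (fun s : ℝ ↦ f (x + s • d)) ⟪gradient f (x + t • d), d⟫ t := by
  have hline : HasDerivAt (fun s : ℝ ↦ x + s • d) d t := by
    simpa using ((hasDerivAt_id t).smul_const d).const_add x
  exact hf.hasGradientAt.hasFDerivAt.comp_hasDerivAt t hline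

theorem Convex.le_add_inner_gradient_add_sq {f : E → ℝ} {C : Set E} {l : ℝ}
    (hC : Convex ℝ C) (hdiff : ∀ x ∈ C, DifferentiableAt ℝ f x)
    (hsmooth : ∀ x ∈ C, ∀ y ∈ C, ‖gradient f x - gradient f y‖ ≤ l * ‖x - y‖)
    {x y : E} (hx : x ∈ C) (hy : y ∈ C) :
    f y ≤ f x + ⟪gradient f x, y - x⟫ + l / 2 * ‖y - x‖ ^ 2 := by
  set d := y - x
  have hmem : ∀ t ∈ Icc (0 : ℝ) 1, x + t • d ∈ C := fun t ht ↦ hC.add_smul_sub_mem hx hy ht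
  -- `t ↦ f (x + t • d)` minus its quadratic upper model around `t = 0` is antitone on `[0, 1]`
  set δ : ℝ → ℝ := fun t ↦ f (x + t • d) - t * ⟪gradient f x, d⟫ - l / 2 * t ^ 2 * ‖d‖ ^ 2
  have hδ : ∀ t ∈ Icc (0 : ℝ) 1,
      HasDerivAt δ (⟪gradient f (x + t • d) - gradient f x, d⟫ - l * t * ‖d‖ ^ 2) t := by
    intro t ht
    have := ((hasDerivAt_comp_add_smul (hdiff _ (hmem t ht))).sub
      ((hasDerivAt_id t).mul_const ⟪gradient f x, d⟫)).sub
      (((hasDerivAt_pow 2 t).const_mul (l / 2)).mul_const (‖d‖ ^ 2))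
    refine this.congr_deriv ?_
    rw [inner_sub_left]
    push_cast
    ring
  have hanti : AntitoneOn δ (Icc 0 1) := by
    refine antitoneOn_of_hasDerivWithinAt_nonpos (convex_Icc 0 1)
      (fun t ht ↦ (hδ t ht).continuousAt.continuousWithinAt)
      (fun t ht ↦ (hδ t (interior_subset ht)).hasDerivWithinAt) ?_
    intro t ht
    rw [interior_Icc] at ht
    have hlip := hsmooth _ (hmem t (Ioo_subset_Icc_self ht)) x hx
    rw [add_sub_cancel_left, norm_smul, Real.norm_of_nonneg ht.1.le] at hlip
    calc ⟪gradient f (x + t • d) - gradient f x, d⟫ - l * t * ‖d‖ ^ 2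
        ≤ ‖gradient f (x + t • d) - gradient f x‖ * ‖d‖ - l * t * ‖d‖ ^ 2 := by
          gcongr; exact real_inner_le_norm _ _
      _ ≤ l * (t * ‖d‖) * ‖d‖ - l * t * ‖d‖ ^ 2 := by gcongr
      _ = 0 := by ring
  have h10 : δ 1 ≤ δ 0 :=
    hanti (left_mem_Icc.2 zero_le_one) (right_mem_Icc.2 zero_le_one) zero_le_one
  have hy' : x + (1 : ℝ) • d = y := by rw [one_smul, add_sub_cancel]
  simp only [δ, hy', zero_smul, add_zero] at h10
  linarith

end

theorem descent_with_inexact_gradient_general {n : ℕ}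
    (f : EuclideanSpace ℝ (Fin n) → ℝ) (C : Set (EuclideanSpace ℝ (Fin n)))
    (l β : ℝ) (hl : 0 < l) (hβ : 0 < β)
    (hCconv : Convex ℝ C)
    (hdiff : ∀ x ∈ C, DifferentiableAt ℝ f x)
    (hsmooth : ∀ x ∈ C, ∀ y ∈ C, ‖gradient f x - gradient f y‖ ≤ l * ‖x - y‖)
    (x g xplus : EuclideanSpace ℝ (Fin n)) (hx : x ∈ C)
    (hmem : xplus ∈ C)
    -- `xplus` is the Euclidean projection of `x - β • g` onto `C`
    (hproj : ∀ y ∈ C, ‖x - β • g - xplus‖ ≤ ‖x - β • g - y‖) :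
    f xplus - f x ≤ (3 * l / 4 - 1 / β) * ‖x - xplus‖ ^ 2
      + (1 / l) * ‖gradient f x - g‖ ^ 2 := by
  have hdescent := hCconv.le_add_inner_gradient_add_sq hdiff hsmooth hx hmem
  have hstep : 1 / β * ‖x - xplus‖ ^ 2 ≤ ⟪g, x - xplus⟫ := by
    rw [one_div_mul_eq_div, div_le_iff₀' hβ]
    exact norm_sub_sq_le_mul_inner_of_forall_norm_sub_le hCconv hx hmem hproj
  have herror := inner_le_one_div_mul_norm_sq_add hl (gradient f x - g) (xplus - x)
  have hsplit : ⟪gradient f x, xplus - x⟫ = ⟪gradient f x - g, xplus - x⟫ - ⟪g, x - xplus⟫ := by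
    rw [inner_sub_left, ← neg_sub x xplus, inner_neg_right, inner_neg_right]
    ring
  rw [norm_sub_rev xplus x] at hdescent herror
  linarith

/-- Descent-lemma corollary with inexact gradients: for `f` `l`-smooth on a closed convex
set `C`, `x ∈ C` and `x⁺ = Proj_C(x - β g)`,
`f(x⁺) - f(x) ≤ (3l/4 - 1/β)‖x - x⁺‖² + (1/l)‖∇f(x) - g‖²`. -/
theorem descent_with_inexact_gradient {n : ℕ}
    (f : EuclideanSpace ℝ (Fin n) → ℝ) (C : Set (EuclideanSpace ℝ (Fin n)))
    (l β : ℝ) (hl : 0 < l) (hβ : 0 < β)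
    (hCconv : Convex ℝ C) (hCclosed : IsClosed C)
    (hdiff : ∀ x ∈ C, DifferentiableAt ℝ f x)
    (hsmooth : ∀ x ∈ C, ∀ y ∈ C, ‖gradient f x - gradient f y‖ ≤ l * ‖x - y‖)
    (x g xplus : EuclideanSpace ℝ (Fin n)) (hx : x ∈ C)
    (hmem : xplus ∈ C)
    -- `xplus` is the Euclidean projection of `x - β • g` onto `C`
    (hproj : ∀ y ∈ C, ‖x - β • g - xplus‖ ≤ ‖x - β • g - y‖) :
    f xplus - f x ≤ (3 * l / 4 - 1 / β) * ‖x - xplus‖ ^ 2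
      + (1 / l) * ‖gradient f x - g‖ ^ 2 :=
  descent_with_inexact_gradient_general f C l β hl hβ hCconv hdiff hsmooth x g xplus hx hmem hproj
end

section
/- KL-based lower bound on the softmax-update log-partition function: let \pi \in \Delta(A) with \min over optimal actions mass c := \sum_{a \in \arg\max_a A(a)} \pi(a) > 0, suppose \beta\|A\|_{\infty} \le 1 and \sum_a \pi(a) A(a) = 0. Then \log Z \ge (c/3)(\beta \max_a A(a))^2, where Z = \sum_a \pi(a) \exp(\beta A(a)). -/
open Classical in
/-- KL-based lower bound on the log-partition function of the softmax (NPG) update: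
if `π` is a distribution over actions, `A` has zero mean under `π`, `β‖A‖_∞ ≤ 1`, and
`c > 0` is the mass `π` puts on the maximizers of `A`, then
`log Z ≥ (c/3)(β max_a A(a))²` where `Z = ∑_a π(a) exp(β A(a))`. -/
theorem log_partition_lower_bound {𝒜 : Type*} [Fintype 𝒜] [Nonempty 𝒜]
    (π Adv : 𝒜 → ℝ) (β : ℝ) (hβ : 0 < β)
    (hπnn : ∀ a, 0 ≤ π a) (hπsum : ∑ a, π a = 1)
    (hmean : ∑ a, π a * Adv a = 0)
    (hβA : ∀ a, β * |Adv a| ≤ 1)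
    (hc : 0 < ∑ a, if (∀ b, Adv b ≤ Adv a) then π a else 0) :
    ((∑ a, if (∀ b, Adv b ≤ Adv a) then π a else 0) / 3) * (β * ⨆ a, Adv a) ^ 2 ≤
      Real.log (∑ a, π a * Real.exp (β * Adv a)) := by
  obtain ⟨a₀, ha₀⟩ := Finite.exists_max Adv
  have hbdd : BddAbove (Set.range Adv) := (Set.finite_range Adv).bddAbove
  set M : ℝ := ⨆ a, Adv a with hMdef
  have hMa : M = Adv a₀ := le_antisymm (ciSup_le ha₀) (le_ciSup hbdd a₀)
  have hmaxeq : ∀ a, (∀ b, Adv b ≤ Adv a) → Adv a = M := fun a h => by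
    rw [hMa]; exact le_antisymm (ha₀ a) (h a₀)
  set c : ℝ := ∑ a, if (∀ b, Adv b ≤ Adv a) then π a else 0 with hcdef
  have hc1 : c ≤ 1 := by
    rw [hcdef, ← hπsum]
    refine Finset.sum_le_sum fun a _ => ?_
    split_ifs
    · exact le_rfl
    · exact hπnn a
  have hM0 : 0 ≤ M := by
    by_contra hneg
    push_neg at hneg
    have h1 : ∑ a, π a * Adv a ≤ ∑ a, π a * M :=
      Finset.sum_le_sum fun a _ =>
        mul_le_mul_of_nonneg_left (hMa ▸ ha₀ a) (hπnn a)
    rw [hmean, ← Finset.sum_mul, hπsum, one_mul] at h1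
    linarith
  set x : ℝ := β * M with hxdef
  have hx0 : 0 ≤ x := mul_nonneg hβ.le hM0
  have hx1 : x ≤ 1 := by
    have := hβA a₀
    rwa [abs_of_nonneg (hMa ▸ hM0), ← hMa] at this
  set r : ℝ := x ^ 2 / 3 with hrdef
  have hr0 : 0 ≤ r := by positivity
  have hr1 : r ≤ 1 / 3 := by nlinarith
  -- Step 1 : Z ≥ 1 + c (e^x - 1 - x)
  have hZ1 : 1 + c * (Real.exp x - 1 - x) ≤ ∑ a, π a * Real.exp (β * Adv a) := by
    have key : ∀ a ∈ Finset.univ (α := 𝒜),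
        π a * (1 + β * Adv a)
          + (if (∀ b, Adv b ≤ Adv a) then π a else 0) * (Real.exp x - 1 - x)
        ≤ π a * Real.exp (β * Adv a) := by
      intro a _
      by_cases h : ∀ b, Adv b ≤ Adv a
      · rw [if_pos h, hmaxeq a h]
        have : π a * (1 + β * M) + π a * (Real.exp x - 1 - x)
            = π a * Real.exp (β * M) := by rw [hxdef]; ring
        rw [this]
      · rw [if_neg h, zero_mul, add_zero]
        exact mul_le_mul_of_nonneg_left (by linarith [Real.add_one_le_exp (β * Adv a)]) (hπnn a)
    calc 1 + c * (Real.exp x - 1 - x)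
        = ∑ a, (π a * (1 + β * Adv a)
            + (if (∀ b, Adv b ≤ Adv a) then π a else 0) * (Real.exp x - 1 - x)) := by
          rw [Finset.sum_add_distrib, ← Finset.sum_mul, ← hcdef]
          have h1 : ∑ a, π a * (1 + β * Adv a)
              = ∑ a, (π a + β * (π a * Adv a)) := by
            refine Finset.sum_congr rfl fun a _ => ?_; ring
          rw [h1, Finset.sum_add_distrib, hπsum, ← Finset.mul_sum, hmean, mul_zero]
          ring
      _ ≤ ∑ a, π a * Real.exp (β * Adv a) := Finset.sum_le_sum key
  -- Step 2 : e^r ≤ e^x - x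
  have hstepA : Real.exp r ≤ Real.exp x - x := by
    have hb := Real.exp_bound (x := r) (by rw [abs_of_nonneg hr0]; linarith) (n := 2)
      (by norm_num)
    have hb' : Real.exp r ≤ 1 + r + 3 / 4 * r ^ 2 := by
      have h2 : ∑ m ∈ Finset.range 2, r ^ m / m.factorial = 1 + r := by
        simp [Finset.sum_range_succ]
      rw [h2, abs_of_nonneg hr0] at hb
      have := abs_le.mp hb
      norm_num at this ⊢
      linarith [this.2]
    have hq : 1 + x + x ^ 2 / 2 ≤ Real.exp x := Real.quadratic_le_exp_of_nonneg hx0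
    nlinarith [sq_nonneg x, sq_nonneg (x^2)]
  -- Step 3 : convexity: e^{c r} ≤ 1 - c + c e^r
  have hconv : Real.exp (c * r) ≤ 1 - c + c * Real.exp r := by
    have := convexOn_exp.2 (Set.mem_univ (0 : ℝ)) (Set.mem_univ r)
      (by linarith : (0:ℝ) ≤ 1 - c) hc.le (by ring)
    simpa [smul_eq_mul, Real.exp_zero] using this
  -- Combine
  have hZ2 : Real.exp (c * r) ≤ ∑ a, π a * Real.exp (β * Adv a) := by
    have : 1 - c + c * Real.exp r ≤ 1 + c * (Real.exp x - 1 - x) := by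
      nlinarith [hc.le]
    linarith
  have hZpos : 0 < ∑ a, π a * Real.exp (β * Adv a) :=
    lt_of_lt_of_le (Real.exp_pos _) hZ2
  have : c * r ≤ Real.log (∑ a, π a * Real.exp (β * Adv a)) :=
    (Real.le_log_iff_exp_le hZpos).mpr hZ2
  calc (c / 3) * (β * M) ^ 2 = c * r := by rw [hrdef, hxdef]; ring
    _ ≤ _ := this
end

section
/- Sensitivity of the differential value function: under the span bound \kappa on differential Q-functions and the resolvent bound \kappa_1 := \max_{\pi} \|(I - P^{\pi} + P^{\pi,\infty})^{-1}\|_{\infty}, for any two policies \pi, \pi' and reward in [0,1], \|V^{\pi} - V^{\pi'}\|_{\infty} \le \kappa_1 (2 + S(\kappa + \kappa_1) + S\kappa\kappa_1) \max_s \|\pi(\cdot|s) - \pi'(\cdot|s)\|_1. -/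
/-- State transition matrix induced by a policy. -/
noncomputable def inducedP {S A : Type*} [Fintype A]
    (P : S → A → S → ℝ) (π : S → A → ℝ) : Matrix S S ℝ :=
  fun s s' => ∑ a, π s a * P s a s'

/-- One-step reward induced by a policy. -/
noncomputable def inducedR {S A : Type*} [Fintype A]
    (r : S → A → ℝ) (π : S → A → ℝ) : S → ℝ :=
  fun s => ∑ a, π s a * r s a

/-- The infinite-step transition matrix: all rows equal to `ν`. -/
noncomputable def matInf {S : Type*} (ν : S → ℝ) : Matrix S S ℝ :=
  Matrix.of fun _ s' => ν s'

/-- The differential value function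
`V^π = (I - P^π + P^{π,∞})⁻¹ (I - P^{π,∞}) r^π`. -/
noncomputable def diffV {S : Type*} [Fintype S] [DecidableEq S]
    (Pm : Matrix S S ℝ) (ν : S → ℝ) (rv : S → ℝ) : S → ℝ :=
  ((1 - Pm + matInf ν)⁻¹).mulVec ((1 - matInf ν).mulVec rv)

/-! ### Auxiliary lemmas -/

/-- Each row sum is at most the `rowSumNorm`. -/
lemma sum_abs_le_rowSumNorm {S : Type*} [Fintype S] (M : Matrix S S ℝ) (i : S) :
    ∑ j, |M i j| ≤ rowSumNorm M := by
  unfold rowSumNorm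
  exact le_ciSup (f := fun i => ∑ j, |M i j|)
    (Set.Finite.bddAbove (Set.finite_range _)) i

/-- Each policy row `ℓ¹`-distance is at most `polDist`. -/
lemma row_le_polDist {S A : Type*} [Fintype S] [Fintype A] (π π' : S → A → ℝ) (s : S) :
    ∑ a, |π s a - π' s a| ≤ polDist π π' := by
  unfold polDist
  exact le_ciSup (f := fun s => ∑ a, |π s a - π' s a|)
    (Set.Finite.bddAbove (Set.finite_range _)) s

/-- Bound on entries of a matrix-vector product. -/
lemma abs_mulVec_le {S : Type*} [Fintype S] (M : Matrix S S ℝ) (v : S → ℝ) {c b : ℝ}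
    (hb : 0 ≤ b) (hM : ∀ i, ∑ j, |M i j| ≤ c) (hv : ∀ j, |v j| ≤ b) (i : S) :
    |M.mulVec v i| ≤ c * b := by
  have h1 : |∑ j, M i j * v j| ≤ c * b := by
    calc |∑ j, M i j * v j| ≤ ∑ j, |M i j * v j| := Finset.abs_sum_le_sum_abs _ _
      _ ≤ ∑ j, |M i j| * b := by
          refine Finset.sum_le_sum fun j _ => ?_
          rw [abs_mul]
          exact mul_le_mul_of_nonneg_left (hv j) (abs_nonneg _)
      _ = (∑ j, |M i j|) * b := (Finset.sum_mul _ _ _).symm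
      _ ≤ c * b := mul_le_mul_of_nonneg_right (hM i) hb
  exact h1

/-- A convex combination of numbers in `[0,1]` lies in `[0,1]`. -/
lemma dot_mem_Icc {ι : Type*} [Fintype ι] (w v : ι → ℝ) (hw0 : ∀ i, 0 ≤ w i)
    (hw1 : ∑ i, w i = 1) (hv : ∀ i, v i ∈ Set.Icc (0 : ℝ) 1) :
    ∑ i, w i * v i ∈ Set.Icc (0 : ℝ) 1 := by
  constructor
  · exact Finset.sum_nonneg fun i _ => mul_nonneg (hw0 i) (hv i).1
  · calc ∑ i, w i * v i ≤ ∑ i, w i * 1 :=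
          Finset.sum_le_sum fun i _ => mul_le_mul_of_nonneg_left (hv i).2 (hw0 i)
      _ = 1 := by simpa using hw1

lemma abs_dot_le_of_abs_le_one {ι : Type*} [Fintype ι] (x v : ι → ℝ)
    (hv : ∀ i, |v i| ≤ 1) : |∑ i, x i * v i| ≤ ∑ i, |x i| := by
  refine (Finset.abs_sum_le_sum_abs _ _).trans (Finset.sum_le_sum fun i _ => ?_)
  rw [abs_mul]
  exact mul_le_of_le_one_right (abs_nonneg _) (hv i)

/-- Sensitivity of the differential value function. -/
theorem differential_value_sensitivity
    {S A : Type*} [Fintype S] [DecidableEq S] [Nonempty S] [Fintype A]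
    (P : S → A → S → ℝ) (r : S → A → ℝ) (π π' : S → A → ℝ)
    (νπ νπ' : S → ℝ) (κ κ1 : ℝ) (hκ0 : 0 ≤ κ) (hκ10 : 0 ≤ κ1)
    (hPnn : ∀ s a s', 0 ≤ P s a s') (hProw : ∀ s a, ∑ s', P s a s' = 1)
    (hπnn : ∀ s a, 0 ≤ π s a) (hπrow : ∀ s, ∑ a, π s a = 1)
    (hπ'nn : ∀ s a, 0 ≤ π' s a) (hπ'row : ∀ s, ∑ a, π' s a = 1)
    (hr : ∀ s a, r s a ∈ Set.Icc (0 : ℝ) 1)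
    (hνπ : (∀ s, 0 ≤ νπ s) ∧ (∑ s, νπ s = 1) ∧
      ∀ s', ∑ s, νπ s * inducedP P π s s' = νπ s')
    (hνπ' : (∀ s, 0 ≤ νπ' s) ∧ (∑ s, νπ' s = 1) ∧
      ∀ s', ∑ s, νπ' s * inducedP P π' s s' = νπ' s')
    (hinv : IsUnit (1 - inducedP P π + matInf νπ) ∧
      IsUnit (1 - inducedP P π' + matInf νπ'))
    -- resolvent bound κ₁
    (hκ1 : rowSumNorm ((1 - inducedP P π + matInf νπ)⁻¹) ≤ κ1 ∧
      rowSumNorm ((1 - inducedP P π' + matInf νπ')⁻¹) ≤ κ1)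
    -- stationary-distribution sensitivity bound κ
    (hκ : ∀ s, |νπ s - νπ' s| ≤ κ * polDist π π') :
    ∀ s, |diffV (inducedP P π) νπ (inducedR r π) s
        - diffV (inducedP P π') νπ' (inducedR r π') s|
      ≤ κ1 * (2 + (Fintype.card S : ℝ) * (κ + κ1)
          + (Fintype.card S : ℝ) * κ * κ1) * polDist π π' := by
  obtain ⟨hν0, hν1, -⟩ := hνπ
  obtain ⟨hν'0, hν'1, -⟩ := hνπ'
  obtain ⟨hU, hU'⟩ := hinv
  obtain ⟨hκ1A, hκ1A'⟩ := hκ1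
  set d := polDist π π' with hdd
  set Sc := (Fintype.card S : ℝ) with hScdef
  have hS1 : (1 : ℝ) ≤ Sc := by
    rw [hScdef]; exact_mod_cast Fintype.card_pos
  have hrowd : ∀ s, ∑ a, |π s a - π' s a| ≤ d := fun s => row_le_polDist π π' s
  have hd0 : 0 ≤ d :=
    le_trans (Finset.sum_nonneg fun a _ => abs_nonneg _) (hrowd (Classical.arbitrary S))
  set Pm := inducedP P π with hPm
  set Pm' := inducedP P π' with hPm'
  set Am := 1 - Pm + matInf νπ with hAm
  set Am' := 1 - Pm' + matInf νπ' with hAm'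
  set rπ := inducedR r π with hrπ
  set rπ' := inducedR r π' with hrπ'
  set u := (1 - matInf νπ).mulVec rπ with hudef
  set u' := (1 - matInf νπ').mulVec rπ' with hu'def
  -- row bounds for the inverses
  have hA : ∀ i, ∑ j, |Am⁻¹ i j| ≤ κ1 := fun i => (sum_abs_le_rowSumNorm _ i).trans hκ1A
  have hA' : ∀ i, ∑ j, |Am'⁻¹ i j| ≤ κ1 := fun i => (sum_abs_le_rowSumNorm _ i).trans hκ1A'
  -- induced rewards lie in [0,1]
  have hrπmem : ∀ s, rπ s ∈ Set.Icc (0 : ℝ) 1 :=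
    fun s => dot_mem_Icc (π s) (r s) (hπnn s) (hπrow s) (hr s)
  have hrπ'mem : ∀ s, rπ' s ∈ Set.Icc (0 : ℝ) 1 :=
    fun s => dot_mem_Icc (π' s) (r s) (hπ'nn s) (hπ'row s) (hr s)
  have habsrπ : ∀ s, |rπ s| ≤ 1 := fun s =>
    abs_le.mpr ⟨by linarith [(hrπmem s).1], (hrπmem s).2⟩
  -- reward difference bound
  have hrd : ∀ s, |rπ s - rπ' s| ≤ d := by
    intro s
    have : rπ s - rπ' s = ∑ a, (π s a - π' s a) * r s a := by
      rw [hrπ, hrπ']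
      simp [inducedR, sub_mul, Finset.sum_sub_distrib]
    rw [this]
    refine (abs_dot_le_of_abs_le_one _ _ fun a => ?_).trans (hrowd s)
    exact abs_le.mpr ⟨by linarith [(hr s a).1], (hr s a).2⟩
  -- stationary distribution dot-product difference
  have hdot : |∑ s', νπ s' * rπ s' - ∑ s', νπ' s' * rπ' s'| ≤ Sc * (κ * d) + d := by
    have hsplit : ∑ s', νπ s' * rπ s' - ∑ s', νπ' s' * rπ' s'
        = (∑ s', (νπ s' - νπ' s') * rπ s') + ∑ s', νπ' s' * (rπ s' - rπ' s') := by
      rw [← Finset.sum_add_distrib, ← Finset.sum_sub_distrib]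
      congr 1; ext s'; ring
    rw [hsplit]
    have h1 : |∑ s', (νπ s' - νπ' s') * rπ s'| ≤ Sc * (κ * d) := by
      refine (abs_dot_le_of_abs_le_one _ _ habsrπ).trans ?_
      calc ∑ s', |νπ s' - νπ' s'| ≤ ∑ _s' : S, κ * d := Finset.sum_le_sum fun s' _ => hκ s'
        _ = Sc * (κ * d) := by rw [Finset.sum_const, Finset.card_univ, nsmul_eq_mul, hScdef]
    have h2 : |∑ s', νπ' s' * (rπ s' - rπ' s')| ≤ d := by
      calc |∑ s', νπ' s' * (rπ s' - rπ' s')| ≤ ∑ s', |νπ' s' * (rπ s' - rπ' s')| :=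
            Finset.abs_sum_le_sum_abs _ _
        _ ≤ ∑ s', νπ' s' * d := by
            refine Finset.sum_le_sum fun s' _ => ?_
            rw [abs_mul, abs_of_nonneg (hν'0 s')]
            exact mul_le_mul_of_nonneg_left (hrd s') (hν'0 s')
        _ = d := by rw [← Finset.sum_mul, hν'1, one_mul]
    calc |_| ≤ |∑ s', (νπ s' - νπ' s') * rπ s'| + |∑ s', νπ' s' * (rπ s' - rπ' s')| :=
          abs_add_le _ _
      _ ≤ Sc * (κ * d) + d := add_le_add h1 h2
  -- formulas for u and u'
  have hu_eq : ∀ s, u s = rπ s - ∑ s', νπ s' * rπ s' := by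
    intro s
    rw [hudef]
    simp [Matrix.sub_mulVec, matInf, Matrix.mulVec, dotProduct, sub_mul,
      Finset.sum_sub_distrib, Matrix.one_apply, ite_mul]
  have hu'_eq : ∀ s, u' s = rπ' s - ∑ s', νπ' s' * rπ' s' := by
    intro s
    rw [hu'def]
    simp [Matrix.sub_mulVec, matInf, Matrix.mulVec, dotProduct, sub_mul,
      Finset.sum_sub_distrib, Matrix.one_apply, ite_mul]
  -- bound on u - u'
  have hud : ∀ s, |(u - u') s| ≤ (2 + Sc * κ) * d := by
    intro s
    have : (u - u') s = (rπ s - rπ' s) - (∑ s', νπ s' * rπ s' - ∑ s', νπ' s' * rπ' s') := by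
      simp only [Pi.sub_apply, hu_eq s, hu'_eq s]; ring
    rw [this]
    calc |(rπ s - rπ' s) - (∑ s', νπ s' * rπ s' - ∑ s', νπ' s' * rπ' s')|
        ≤ |rπ s - rπ' s| + |∑ s', νπ s' * rπ s' - ∑ s', νπ' s' * rπ' s'| := abs_sub _ _
      _ ≤ d + (Sc * (κ * d) + d) := add_le_add (hrd s) hdot
      _ = (2 + Sc * κ) * d := by ring
  -- bound on u'
  have hu'b : ∀ s, |u' s| ≤ 1 := by
    intro s
    rw [hu'_eq s]
    have h1 := hrπ'mem s
    have h2 := dot_mem_Icc νπ' rπ' hν'0 hν'1 hrπ'mem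
    exact abs_le.mpr ⟨by linarith [h1.1, h2.2], by linarith [h1.2, h2.1]⟩
  -- row bound on Pm - Pm'
  have hPd : ∀ s, ∑ s', |Pm s s' - Pm' s s'| ≤ d := by
    intro s
    have he : ∀ s', Pm s s' - Pm' s s' = ∑ a, (π s a - π' s a) * P s a s' := by
      intro s'
      rw [hPm, hPm']
      simp [inducedP, sub_mul, Finset.sum_sub_distrib]
    calc ∑ s', |Pm s s' - Pm' s s'| = ∑ s', |∑ a, (π s a - π' s a) * P s a s'| := by
          simp_rw [he]
      _ ≤ ∑ s', ∑ a, |π s a - π' s a| * P s a s' := by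
          refine Finset.sum_le_sum fun s' _ => ?_
          refine (Finset.abs_sum_le_sum_abs _ _).trans (Finset.sum_le_sum fun a _ => ?_)
          rw [abs_mul, abs_of_nonneg (hPnn s a s')]
      _ = ∑ a, |π s a - π' s a| * ∑ s', P s a s' := by
          rw [Finset.sum_comm]; simp_rw [Finset.mul_sum]
      _ = ∑ a, |π s a - π' s a| := by simp [hProw]
      _ ≤ d := hrowd s
  -- row bound on Am' - Am
  have hAd : ∀ s, ∑ s', |(Am' - Am) s s'| ≤ (1 + Sc * κ) * d := by
    intro s
    have he : ∀ s', (Am' - Am) s s' = (Pm s s' - Pm' s s') + (νπ' s' - νπ s') := by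
      intro s'
      rw [hAm, hAm']
      simp [Matrix.sub_apply, Matrix.add_apply, matInf]
      ring
    calc ∑ s', |(Am' - Am) s s'|
        ≤ ∑ s', (|Pm s s' - Pm' s s'| + |νπ' s' - νπ s'|) := by
          refine Finset.sum_le_sum fun s' _ => ?_
          rw [he s']; exact abs_add_le _ _
      _ = (∑ s', |Pm s s' - Pm' s s'|) + ∑ s', |νπ' s' - νπ s'| :=
          Finset.sum_add_distrib
      _ ≤ d + Sc * (κ * d) := by
          refine add_le_add (hPd s) ?_
          calc ∑ s', |νπ' s' - νπ s'| ≤ ∑ _s' : S, κ * d := by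
                refine Finset.sum_le_sum fun s' _ => ?_
                rw [abs_sub_comm]; exact hκ s'
            _ = Sc * (κ * d) := by rw [Finset.sum_const, Finset.card_univ, nsmul_eq_mul, hScdef]
      _ = (1 + Sc * κ) * d := by ring
  -- matrix inverse identities
  have hdet : IsUnit Am.det := (Matrix.isUnit_iff_isUnit_det Am).mp hU
  have hdet' : IsUnit Am'.det := (Matrix.isUnit_iff_isUnit_det Am').mp hU'
  have hAinv : Am⁻¹ * Am = 1 := Matrix.nonsing_inv_mul Am hdet
  have hA'inv : Am' * Am'⁻¹ = 1 := Matrix.mul_nonsing_inv Am' hdet'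
  have hres : Am⁻¹ - Am'⁻¹ = Am⁻¹ * ((Am' - Am) * Am'⁻¹) := by
    rw [Matrix.sub_mul, Matrix.mul_sub, hA'inv, mul_one, ← Matrix.mul_assoc, hAinv, one_mul]
  -- decomposition of the value difference
  have hvec : diffV Pm νπ rπ - diffV Pm' νπ' rπ'
      = Am⁻¹.mulVec (u - u') + Am⁻¹.mulVec ((Am' - Am).mulVec (Am'⁻¹.mulVec u')) := by
    have h2 : Am⁻¹.mulVec ((Am' - Am).mulVec (Am'⁻¹.mulVec u'))
        = (Am⁻¹ * ((Am' - Am) * Am'⁻¹)).mulVec u' := by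
      rw [Matrix.mulVec_mulVec, Matrix.mulVec_mulVec, Matrix.mul_assoc]
    rw [h2, ← hres]
    show Am⁻¹.mulVec u - Am'⁻¹.mulVec u' = _
    rw [Matrix.mulVec_sub, Matrix.sub_mulVec]
    abel
  -- put everything together
  intro s
  have hSκ : 0 ≤ Sc * κ := mul_nonneg (le_trans zero_le_one hS1) hκ0
  have hstep := congrFun hvec s
  rw [show diffV Pm νπ rπ s - diffV Pm' νπ' rπ' s
      = (diffV Pm νπ rπ - diffV Pm' νπ' rπ') s from rfl, hstep]
  have hb1 : |Am⁻¹.mulVec (u - u') s| ≤ κ1 * ((2 + Sc * κ) * d) := by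
    refine abs_mulVec_le _ _ ?_ hA hud s
    exact mul_nonneg (by linarith) hd0
  have hw : ∀ j, |Am'⁻¹.mulVec u' j| ≤ κ1 * 1 :=
    abs_mulVec_le _ _ zero_le_one hA' hu'b
  have hmid : ∀ j, |(Am' - Am).mulVec (Am'⁻¹.mulVec u') j| ≤ (1 + Sc * κ) * d * (κ1 * 1) := by
    refine abs_mulVec_le _ _ ?_ hAd hw
    exact mul_nonneg hκ10 zero_le_one
  have hb2 : |Am⁻¹.mulVec ((Am' - Am).mulVec (Am'⁻¹.mulVec u')) s|
      ≤ κ1 * ((1 + Sc * κ) * d * (κ1 * 1)) := by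
    refine abs_mulVec_le _ _ ?_ hA hmid s
    exact mul_nonneg (mul_nonneg (by linarith) hd0) (mul_nonneg hκ10 zero_le_one)
  calc |(Am⁻¹.mulVec (u - u') + Am⁻¹.mulVec ((Am' - Am).mulVec (Am'⁻¹.mulVec u'))) s|
      ≤ |Am⁻¹.mulVec (u - u') s| + |Am⁻¹.mulVec ((Am' - Am).mulVec (Am'⁻¹.mulVec u')) s| :=
        abs_add_le _ _
    _ ≤ κ1 * ((2 + Sc * κ) * d) + κ1 * ((1 + Sc * κ) * d * (κ1 * 1)) := add_le_add hb1 hb2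
    _ ≤ κ1 * (2 + Sc * (κ + κ1) + Sc * κ * κ1) * d := by nlinarith [mul_nonneg (mul_nonneg (mul_nonneg hκ10 hκ10) hd0) (sub_nonneg.mpr hS1)]
end

section
/- Telescoping decomposition of the potential difference over simultaneous agent updates: for any potential function \Phi on a product policy space and any two joint policies \pi^t, \pi^{t+1}, \Phi(\pi^{t+1}) - \Phi(\pi^t) = \sum_{i=1}^N (\Phi(\pi_i^{t+1}, \pi_{-i}^t) - \Phi(\pi_i^t, \pi_{-i}^t)) + \sum_{i=1}^N \sum_{j=i+1}^N (\Phi(\pi^{t,t+1}_{-(i,j)}, \pi_i^{t+1}, \pi_j^{t+1}) - \Phi(\pi^{t,t+1}_{-(i,j)}, \pi_i^t, \pi_j^{t+1}) - \Phi(\pi^{t,t+1}_{-(i,j)}, \pi_i^{t+1}, \pi_j^t) + \Phi(\pi^{t,t+1}_{-(i,j)}, \pi_i^t, \pi_j^t)), where \pi^{t,t+1}_{-(i,j)} = (\pi^t_{1:i-1}, \pi^t_{i+1:j-1}, \pi^{t+1}_{j+1:N}). -/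
/-- The joint policy `(π^t_{1:i-1}, x_i, π^t_{i+1:j-1}, y_j, π^{t+1}_{j+1:N})`: agent `i`
uses `x`, agent `j` uses `y`, agents before `j` (other than `i`) use `πt`, and agents
after `j` use `πt1`. -/
def mixPolicy {N : ℕ} {Pol : Type*} [DecidableEq (Fin N)]
    (πt πt1 : Fin N → Pol) (i j : Fin N) (x y : Pol) : Fin N → Pol :=
  fun k => if k = i then x else if k = j then y else if k < j then πt k else πt1 k

private lemma tele_Ico (g : ℕ → ℝ) {a b : ℕ} (h : a ≤ b) :
    ∑ m ∈ Finset.Ico a b, (g m - g (m + 1)) = g a - g b := by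
  rw [Finset.sum_Ico_eq_sub _ h, Finset.sum_range_sub' g, Finset.sum_range_sub' g]
  ring

/-- Telescoping decomposition of the potential difference over simultaneous agent
updates into first-order single-agent differences and second-order cross differences. -/
theorem potential_telescoping_decomposition
    {N : ℕ} {Pol : Type*} (Φ : (Fin N → Pol) → ℝ) (πt πt1 : Fin N → Pol) :
    Φ πt1 - Φ πt =
      (∑ i, (Φ (Function.update πt i (πt1 i)) - Φ πt))
      + ∑ i, ∑ j ∈ Finset.univ.filter (fun j => i < j),
          (Φ (mixPolicy πt πt1 i j (πt1 i) (πt1 j))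
            - Φ (mixPolicy πt πt1 i j (πt i) (πt1 j))
            - Φ (mixPolicy πt πt1 i j (πt1 i) (πt j))
            + Φ (mixPolicy πt πt1 i j (πt i) (πt j))) := by
  classical
  -- hybrid policy with cutoff m
  set H : ℕ → Fin N → Pol := fun m k => if (k : ℕ) < m then πt k else πt1 k with hH
  -- intermediate policy: agent j uses y, agents with index < m use πt, others πt1
  set Q : Fin N → ℕ → Pol → (Fin N → Pol) :=
    fun j m y k => if k = j then y else if (k : ℕ) < m then πt k else πt1 k with hQ
  -- second-order summand
  set A : Fin N → Fin N → ℝ := fun i j =>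
    Φ (mixPolicy πt πt1 i j (πt1 i) (πt1 j))
      - Φ (mixPolicy πt πt1 i j (πt i) (πt1 j))
      - Φ (mixPolicy πt πt1 i j (πt1 i) (πt j))
      + Φ (mixPolicy πt πt1 i j (πt i) (πt j)) with hA
  have step1 : Φ πt1 - Φ πt = ∑ j : Fin N, (Φ (H (j : ℕ)) - Φ (H ((j : ℕ) + 1))) := by
    have e0 : H 0 = πt1 := by funext k; simp [hH]
    have eN : H N = πt := by funext k; simp [hH, k.isLt]
    rw [Fin.sum_univ_eq_sum_range (fun m => Φ (H m) - Φ (H (m + 1))) N,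
      Finset.sum_range_sub' (fun m => Φ (H m)), e0, eN]
  rw [step1, ← Finset.sum_add_distrib]
  refine Finset.sum_congr rfl fun j _ => ?_
  -- per-agent identity
  have hQj1 : Q j ((j : ℕ) + 1) (πt1 j) = H (j : ℕ) := by
    funext k
    by_cases hk : k = j
    · subst hk; simp [hQ, hH]
    · have : ((k : ℕ) < (j : ℕ) + 1) ↔ ((k : ℕ) < (j : ℕ)) := by
        constructor
        · intro h
          rcases Nat.lt_succ_iff_lt_or_eq.mp h with h' | h'
          · exact h'
          · exact absurd (Fin.ext h') hk
        · exact fun h => Nat.lt_succ_of_lt h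
      simp [hQ, hH, hk, this]
  have hQj2 : Q j ((j : ℕ) + 1) (πt j) = H ((j : ℕ) + 1) := by
    funext k
    by_cases hk : k = j
    · subst hk; simp [hQ, hH]
    · simp [hQ, hH, hk]
  have hQN : ∀ y, Q j N y = Function.update πt j y := by
    intro y
    funext k
    by_cases hk : k = j
    · subst hk; simp [hQ]
    · simp [hQ, hk, k.isLt, Function.update_apply]
  -- the ℕ-indexed second-order summand
  set g : ℕ → ℝ := fun m =>
    (Φ (Q j m (πt1 j)) - Φ (Q j m (πt j)))
      - (Φ (Q j (m + 1) (πt1 j)) - Φ (Q j (m + 1) (πt j))) with hg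
  have tele : ∑ m ∈ Finset.Ico ((j : ℕ) + 1) N, g m
      = (Φ (Q j ((j : ℕ) + 1) (πt1 j)) - Φ (Q j ((j : ℕ) + 1) (πt j)))
        - (Φ (Q j N (πt1 j)) - Φ (Q j N (πt j))) :=
    tele_Ico (fun m => Φ (Q j m (πt1 j)) - Φ (Q j m (πt j))) j.isLt
  -- identify g m with A j ⟨m⟩ on the Ico
  have hmix : ∀ (m : ℕ) (hm1 : (j : ℕ) < m) (hm2 : m < N) (y : Pol),
      (Q j m y = mixPolicy πt πt1 j ⟨m, hm2⟩ y (πt1 ⟨m, hm2⟩))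
      ∧ (Q j (m + 1) y = mixPolicy πt πt1 j ⟨m, hm2⟩ y (πt ⟨m, hm2⟩)) := by
    intro m hm1 hm2 y
    have hjm : j ≠ (⟨m, hm2⟩ : Fin N) := by
      intro h; exact absurd (congrArg Fin.val h) (Nat.ne_of_lt hm1)
    constructor
    · funext k
      by_cases hkj : k = j
      · subst hkj; simp [hQ, mixPolicy]
      · by_cases hkm : k = (⟨m, hm2⟩ : Fin N)
        · subst hkm
          simp [hQ, mixPolicy, hkj]
        · have : ((k : ℕ) < m) ↔ k < (⟨m, hm2⟩ : Fin N) := Iff.rfl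
          simp [hQ, mixPolicy, hkj, hkm, Fin.lt_def]
    · funext k
      by_cases hkj : k = j
      · subst hkj
        simp [hQ, mixPolicy, hjm, Nat.lt_succ_of_lt hm1]
      · by_cases hkm : k = (⟨m, hm2⟩ : Fin N)
        · subst hkm
          simp [hQ, mixPolicy, hkj, Nat.lt_succ_self]
        · have hne : (k : ℕ) ≠ m := fun h => hkm (Fin.ext h)
          have : ((k : ℕ) < m + 1) ↔ (k : ℕ) < m := by
            constructor
            · intro h
              rcases Nat.lt_succ_iff_lt_or_eq.mp h with h' | h'
              · exact h'
              · exact absurd h' hne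
            · exact fun h => Nat.lt_succ_of_lt h
          simp [hQ, mixPolicy, hkj, hkm, Fin.lt_def, this]
  -- transport the Ico sum to the filtered Fin sum
  have sum_eq : ∑ j' ∈ Finset.univ.filter (fun j' => j < j'), A j j'
      = ∑ m ∈ Finset.Ico ((j : ℕ) + 1) N, g m := by
    refine Finset.sum_bij' (fun j' _ => (j' : ℕ)) (fun m hm => ⟨m, (Finset.mem_Ico.mp hm).2⟩)
      ?_ ?_ ?_ ?_ ?_
    · intro j' hj'
      have : j < j' := (Finset.mem_filter.mp hj').2
      exact Finset.mem_Ico.mpr ⟨this, j'.isLt⟩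
    · intro m hm
      have := Finset.mem_Ico.mp hm
      exact Finset.mem_filter.mpr ⟨Finset.mem_univ _, this.1⟩
    · intro j' _; rfl
    · intro m _; rfl
    · intro j' hj'
      have hlt : j < j' := (Finset.mem_filter.mp hj').2
      simp only [hA, hg]
      rw [(hmix (j' : ℕ) hlt j'.isLt (πt1 j)).1, (hmix (j' : ℕ) hlt j'.isLt (πt j)).1,
        (hmix (j' : ℕ) hlt j'.isLt (πt1 j)).2, (hmix (j' : ℕ) hlt j'.isLt (πt j)).2]
      simp only [Fin.eta]
      ring
  rw [sum_eq, tele, hQj1, hQj2, hQN, hQN]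
  have : Function.update πt j (πt j) = πt := Function.update_eq_self j πt
  rw [this]
  ring
end
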